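/- arXiv:0709.1556 — 2 statements merged into one kernel-verified Lean document; each statement's English description precedes it below -/
import Mathlib

section
/- Let n be an even positive integer and ξ a complex non-real algebraic number of degree greater than n with t_n(ξ) > (n+1)/2. Then ξ + ξ̄ and ξ·ξ̄ both lie in ℚ(ξ), so that [ℚ(ξ) : ℚ(ξ) ∩ ℝ] = 2. -/
open Polynomial

/-- The ℚ-vector space of polynomials `f ∈ ℚ[X]` of degree at most `n`
with `μ * f(ξ) ∈ ℝ`. -/
noncomputable def Vspace (n : ℕ) (μ ξ : ℂ) : Submodule ℚ ℚ[X] where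
  carrier := {f | f.natDegree ≤ n ∧ ∃ r : ℝ, μ * aeval ξ f = (r : ℂ)}
  zero_mem' := ⟨by simp, 0, by simp⟩
  add_mem' := by
    rintro f g ⟨hf, r, hr⟩ ⟨hg, s, hs⟩
    refine ⟨(natDegree_add_le f g).trans (by simp [hf, hg]), r + s, ?_⟩
    push_cast
    rw [map_add, mul_add, hr, hs]
  smul_mem' := by
    rintro c f ⟨hf, r, hr⟩
    refine ⟨(natDegree_smul_le c f).trans hf, c * r, ?_⟩
    rw [map_smul, Algebra.mul_smul_comm, hr, Rat.smul_def]
    push_cast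
    ring

/-- `t_n(ξ)`: the maximum over nonzero `μ ∈ ℂ` of `dim_ℚ V_n(μ,ξ)`. -/
noncomputable def tdeg (n : ℕ) (ξ : ℂ) : ℕ :=
  sSup {d : ℕ | ∃ μ : ℂ, μ ≠ 0 ∧ d = Module.finrank ℚ (Vspace n μ ξ)}

/-- The subfield of real elements of `ℂ`, as an intermediate field of `ℚ ⊆ ℂ`. -/
noncomputable def realSubfield : IntermediateField ℚ ℂ :=
  Subfield.toIntermediateField Complex.ofRealHom.fieldRange
    (fun x => ⟨(x : ℝ), by simp⟩)

/-!
Choose `μ` realising `t = tdeg n ξ` and put `V = V_n(μ, ξ)`. For non-real `ξ` we have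
`V ∩ X V = 0`, so `2 t > n + 1` forces `V ⊕ X V` to be all polynomials of degree `≤ n + 1`.
Decomposing `1, X, X²` gives `μ ξ^k = a_k + ξ b_k` with `a_k, b_k` real and in `μ ℚ(ξ)`. Two
consecutive such identities make `ξ` a root of a real quadratic with coefficients in `μ ℚ(ξ)`,
whose other root is then `ξ̄`; Vieta puts `ξ + ξ̄` and `ξ ξ̄` in `ℚ(ξ)`. Hence `ℚ(ξ)` is stable
under conjugation and `ℚ(ξ) = M ⊕ (ξ - ξ̄) M` with `M = ℚ(ξ) ∩ ℝ`.
-/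

open ComplexConjugate Module IntermediateField

theorem Submodule.finrank_sup_map_eq_two_mul {K V : Type*} [DivisionRing K] [AddCommGroup V]
    [Module K V] {P : Submodule K V} [FiniteDimensional K P] {f : V →ₗ[K] V}
    (hf : Function.Injective f) (hdisj : Disjoint P (P.map f)) :
    finrank K ↥(P ⊔ P.map f) = 2 * finrank K P := by
  have h := finrank_sup_add_finrank_inf_eq P (P.map f)
  rw [hdisj.eq_bot, finrank_bot, ← (equivMapOfInjective f hf P).finrank_eq] at h
  omega

theorem Polynomial.finrank_degreeLT (R : Type*) [Semiring R] [StrongRankCondition R] (m : ℕ) :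
    finrank R (degreeLT R m) = m := by
  rw [finrank_eq_card_basis (degreeLT.basis R m), Fintype.card_fin]

theorem IntermediateField.apply_mem_adjoin_simple {F E : Type*} [Field F] [Field E] [Algebra F E]
    (σ : E →ₐ[F] E) {ξ z : E} (hσ : σ ξ ∈ F⟮ξ⟯) (hz : z ∈ F⟮ξ⟯) : σ z ∈ F⟮ξ⟯ := by
  have hmap : F⟮ξ⟯.map σ ≤ F⟮ξ⟯ := by
    rw [adjoin_map, Set.image_singleton, adjoin_simple_le_iff]
    exact hσ
  exact hmap ⟨z, hz, rfl⟩

theorem Complex.conj_ne_self {ξ : ℂ} (hξ : ξ.im ≠ 0) : conj ξ ≠ ξ :=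
  mt conj_eq_iff_im.1 hξ

theorem Complex.eq_zero_of_conj_eq_of_conj_mul_eq {ξ r : ℂ} (hξ : ξ.im ≠ 0) (hr : conj r = r)
    (hξr : conj (ξ * r) = ξ * r) : r = 0 := by
  rw [map_mul, hr] at hξr
  have h : (conj ξ - ξ) * r = 0 := by linear_combination hξr
  exact (mul_eq_zero.1 h).resolve_left (sub_ne_zero.2 (conj_ne_self hξ))

theorem Complex.add_conj_eq_and_mul_conj_eq_of_quadratic {ξ a b c d : ℂ} (hξ : ξ.im ≠ 0)
    (ha : conj a = a) (hb : conj b = b) (hc : conj c = c) (hd : conj d = d) (hb0 : b ≠ 0)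
    (h : ξ * (a + ξ * b) = c + ξ * d) :
    ξ + conj ξ = (d - a) / b ∧ ξ * conj ξ = -c / b := by
  have hconj : conj ξ * (a + conj ξ * b) = c + conj ξ * d := by
    simpa only [map_mul, map_add, ha, hb, hc, hd] using congrArg conj h
  have htrace : (ξ + conj ξ) * b = d - a := by
    refine mul_left_cancel₀ (sub_ne_zero.2 (conj_ne_self hξ).symm) ?_
    linear_combination h - hconj
  refine ⟨(eq_div_iff hb0).2 htrace, (eq_div_iff hb0).2 ?_⟩
  linear_combination ξ * htrace - h

theorem Subfield.add_conj_mem_and_mul_conj_mem_of_quadratic {K : Subfield ℂ} {μ ξ α β γ δ : ℂ}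
    (hξ : ξ.im ≠ 0) (hα : α ∈ K) (hβ : β ∈ K) (hγ : γ ∈ K) (hδ : δ ∈ K)
    (hμα : conj (μ * α) = μ * α) (hμβ : conj (μ * β) = μ * β) (hμγ : conj (μ * γ) = μ * γ)
    (hμδ : conj (μ * δ) = μ * δ) (hμβ0 : μ * β ≠ 0) (h : ξ * (α + ξ * β) = γ + ξ * δ) :
    ξ + conj ξ ∈ K ∧ ξ * conj ξ ∈ K := by
  obtain ⟨htrace, hnorm⟩ := Complex.add_conj_eq_and_mul_conj_eq_of_quadratic hξ hμα hμβ hμγ hμδ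
    hμβ0 (by linear_combination μ * h)
  have hμ : μ ≠ 0 := left_ne_zero_of_mul hμβ0
  rw [htrace, hnorm, ← mul_sub, ← mul_neg, mul_div_mul_left _ _ hμ, mul_div_mul_left _ _ hμ]
  exact ⟨div_mem (sub_mem hδ hα) hβ, div_mem (neg_mem hγ) hβ⟩

theorem Subfield.add_conj_mem_and_mul_conj_mem {K : Subfield ℂ} {μ ξ : ℂ} (hμ : μ ≠ 0)
    (hξ : ξ.im ≠ 0) (h : ∀ k ≤ 2, ∃ α ∈ K, ∃ β ∈ K,
      conj (μ * α) = μ * α ∧ conj (μ * β) = μ * β ∧ ξ ^ k = α + ξ * β) :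
    ξ + conj ξ ∈ K ∧ ξ * conj ξ ∈ K := by
  obtain ⟨α₀, hα₀, β₀, hβ₀, hμα₀, hμβ₀, h₀⟩ := h 0 (by norm_num)
  obtain ⟨α₁, hα₁, β₁, hβ₁, hμα₁, hμβ₁, h₁⟩ := h 1 (by norm_num)
  obtain ⟨α₂, hα₂, β₂, hβ₂, hμα₂, hμβ₂, h₂⟩ := h 2 le_rfl
  by_cases hb₀ : μ * β₀ = 0
  · -- then `μ = μ α₀` is real, so `μ β₁ = 0` would make `μ ξ = μ α₁` real as well
    refine add_conj_mem_and_mul_conj_mem_of_quadratic hξ hα₁ hβ₁ hα₂ hβ₂ hμα₁ hμβ₁ hμα₂ hμβ₂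
      (fun hb₁ => hμ ?_) (by linear_combination h₂ - ξ * h₁)
    refine Complex.eq_zero_of_conj_eq_of_conj_mul_eq hξ ?_ ?_
    · rwa [show μ = μ * α₀ by linear_combination μ * h₀ + ξ * hb₀]
    · rwa [show ξ * μ = μ * α₁ by linear_combination μ * h₁ + ξ * hb₁]
  · exact add_conj_mem_and_mul_conj_mem_of_quadratic hξ hα₀ hβ₀ hα₁ hβ₁ hμα₀ hμβ₀ hμα₁ hμβ₁ hb₀
      (by linear_combination h₁ - ξ * h₀)

theorem mem_realSubfield_iff {z : ℂ} : z ∈ realSubfield ↔ conj z = z := by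
  rw [Complex.conj_eq_iff_real]
  exact exists_congr fun _ => eq_comm

theorem finrank_eq_two_mul_finrank_inf_realSubfield (K : IntermediateField ℚ ℂ)
    [FiniteDimensional ℚ K] (hK : ∀ z ∈ K, conj z ∈ K) {z : ℂ} (hz : z ∈ K) (hzim : z.im ≠ 0) :
    finrank ℚ K = 2 * finrank ℚ ↥(K ⊓ realSubfield) := by
  set δ := z - conj z
  have hδK : δ ∈ K := sub_mem hz (hK z hz)
  have hδ0 : δ ≠ 0 := sub_ne_zero.2 (Complex.conj_ne_self hzim).symm
  have hδ : conj δ = -δ := by simp [δ]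
  set M := Subalgebra.toSubmodule (K ⊓ realSubfield).toSubalgebra
  have hM {w : ℂ} : w ∈ M ↔ w ∈ K ∧ conj w = w := by
    rw [← mem_realSubfield_iff]; exact Iff.rfl
  have hdisj : Disjoint M (M.map (LinearMap.mulLeft ℚ δ)) := by
    rw [Submodule.disjoint_def]
    rintro _ hx ⟨y, hy, rfl⟩
    have hx := (hM.1 hx).2
    rwa [LinearMap.mulLeft_apply, map_mul, hδ, (hM.1 hy).2, neg_mul, neg_eq_self] at hx
  have hsup : M ⊔ M.map (LinearMap.mulLeft ℚ δ) = Subalgebra.toSubmodule K.toSubalgebra := by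
    refine le_antisymm (sup_le (fun w hw => (hM.1 hw).1) ?_) fun w hw => ?_
    · rintro _ ⟨y, hy, rfl⟩
      exact K.mul_mem hδK (hM.1 hy).1
    -- `w = Re w + δ · (Im w / Im δ)`, with both coefficients real and in `K`
    have hw' : conj w ∈ K := hK w hw
    have h2 : (2 : ℂ) ∈ K := ofNat_mem K 2
    refine Submodule.mem_sup.2 ⟨(w + conj w) / 2, hM.2 ⟨div_mem (add_mem hw hw') h2, ?_⟩,
      δ * ((w - conj w) / (2 * δ)), ⟨_, hM.2 ⟨div_mem (sub_mem hw hw') (mul_mem h2 hδK), ?_⟩, rfl⟩,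
      by field_simp; ring⟩
    · simp [add_comm, map_ofNat]
    · rw [map_div₀, map_sub, map_mul, hδ, Complex.conj_conj, map_ofNat, mul_neg, div_neg,
        ← neg_div, neg_sub]
  have : FiniteDimensional ℚ M :=
    Submodule.finiteDimensional_of_le (le_sup_left.trans hsup.le : M ≤ _)
  have h := Submodule.finrank_sup_map_eq_two_mul (mul_right_injective₀ hδ0) hdisj
  rwa [hsup] at h

section Vspace

variable {n : ℕ} {μ ξ : ℂ}

theorem mem_Vspace_iff {f : ℚ[X]} :
    f ∈ Vspace n μ ξ ↔ f.natDegree ≤ n ∧ conj (μ * aeval ξ f) = μ * aeval ξ f := by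
  rw [Complex.conj_eq_iff_real]
  exact Iff.rfl

theorem Vspace_le_degreeLT : Vspace n μ ξ ≤ degreeLT ℚ (n + 1) := by
  intro f hf
  rw [degreeLT_succ_eq_degreeLE, mem_degreeLE, ← natDegree_le_iff_degree_le]
  exact hf.1

instance : FiniteDimensional ℚ (Vspace n μ ξ) :=
  Submodule.finiteDimensional_of_le Vspace_le_degreeLT

theorem finrank_Vspace_le : finrank ℚ (Vspace n μ ξ) ≤ n + 1 :=
  (Submodule.finrank_mono Vspace_le_degreeLT).trans_eq (finrank_degreeLT ℚ _)

theorem exists_finrank_Vspace_eq_tdeg (n : ℕ) (ξ : ℂ) :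
    ∃ μ ≠ 0, finrank ℚ (Vspace n μ ξ) = tdeg n ξ := by
  obtain ⟨μ, hμ, h⟩ := Nat.sSup_mem (s := {d | ∃ μ : ℂ, μ ≠ 0 ∧ d = finrank ℚ (Vspace n μ ξ)})
    ⟨_, 1, one_ne_zero, rfl⟩ ⟨n + 1, by rintro _ ⟨μ, -, rfl⟩; exact finrank_Vspace_le⟩
  exact ⟨μ, hμ, h.symm⟩

variable (hμ : μ ≠ 0) (hξ : ξ.im ≠ 0) (hdeg : n < (minpoly ℚ ξ).natDegree)
include hμ hξ hdeg

/-- `V ∩ X V = 0`: if `μ h(ξ)` and `μ ξ h(ξ)` are both real then `h(ξ) = 0`, and `deg h` is too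
small for that unless `h = 0`. -/
theorem disjoint_Vspace_map_mulLeft_X :
    Disjoint (Vspace n μ ξ) ((Vspace n μ ξ).map (LinearMap.mulLeft ℚ X)) := by
  rw [Submodule.disjoint_def]
  rintro _ hXh ⟨h, hh, rfl⟩
  replace hh := mem_Vspace_iff.1 hh
  rw [LinearMap.mulLeft_apply] at hXh ⊢
  rw [mem_Vspace_iff, map_mul (aeval ξ), aeval_X, mul_left_comm] at hXh
  have hμh := Complex.eq_zero_of_conj_eq_of_conj_mul_eq hξ hh.2 hXh.2
  rw [eq_zero_of_dvd_of_natDegree_lt (minpoly.dvd ℚ ξ ((mul_eq_zero.1 hμh).resolve_left hμ))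
    (hh.1.trans_lt hdeg), mul_zero]

variable (hdim : n + 1 < 2 * finrank ℚ (Vspace n μ ξ))
include hdim

theorem Vspace_sup_map_mulLeft_X_eq_degreeLT :
    Vspace n μ ξ ⊔ (Vspace n μ ξ).map (LinearMap.mulLeft ℚ X) = degreeLT ℚ (n + 2) := by
  have hle : Vspace n μ ξ ⊔ (Vspace n μ ξ).map (LinearMap.mulLeft ℚ X) ≤ degreeLT ℚ (n + 2) := by
    refine sup_le (Vspace_le_degreeLT.trans (degreeLT_mono (by omega))) ?_
    rintro _ ⟨f, hf, rfl⟩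
    rw [LinearMap.mulLeft_apply, degreeLT_succ_eq_degreeLE, mem_degreeLE,
      ← natDegree_le_iff_degree_le]
    exact (natDegree_mul_le_of_le natDegree_X_le hf.1).trans_eq (add_comm 1 n)
  refine Submodule.eq_of_le_of_finrank_le hle ?_
  rw [finrank_degreeLT, Submodule.finrank_sup_map_eq_two_mul (mul_right_injective₀ X_ne_zero)
    (disjoint_Vspace_map_mulLeft_X hμ hξ hdeg)]
  omega

theorem exists_aeval_eq_add_mul {w : ℚ[X]} (hw : w ∈ degreeLT ℚ (n + 2)) :
    ∃ α ∈ ℚ⟮ξ⟯, ∃ β ∈ ℚ⟮ξ⟯,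
      conj (μ * α) = μ * α ∧ conj (μ * β) = μ * β ∧ aeval ξ w = α + ξ * β := by
  rw [← Vspace_sup_map_mulLeft_X_eq_degreeLT hμ hξ hdeg hdim, Submodule.mem_sup] at hw
  obtain ⟨f, hf, _, ⟨h, hh, rfl⟩, rfl⟩ := hw
  have hmem (p : ℚ[X]) : aeval ξ p ∈ ℚ⟮ξ⟯ :=
    algebra_adjoin_le_adjoin ℚ {ξ} (aeval_mem_adjoin_singleton ℚ ξ)
  exact ⟨_, hmem f, _, hmem h, (mem_Vspace_iff.1 hf).2, (mem_Vspace_iff.1 hh).2, by simp⟩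

end Vspace

theorem trace_norm_mem_and_index_two_of_large_tdeg_general (n : ℕ) (hn : 0 < n)
    (ξ : ℂ) (hξreal : ξ.im ≠ 0)
    (hdeg : n < (minpoly ℚ ξ).natDegree)
    (ht : n + 1 < 2 * tdeg n ξ) :
    ξ + (starRingEnd ℂ) ξ ∈ IntermediateField.adjoin ℚ {ξ} ∧
    ξ * (starRingEnd ℂ) ξ ∈ IntermediateField.adjoin ℚ {ξ} ∧
    2 * Module.finrank ℚ
      (IntermediateField.adjoin ℚ {ξ} ⊓ realSubfield : IntermediateField ℚ ℂ)
      = (minpoly ℚ ξ).natDegree := by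
  obtain ⟨μ, hμ, hμt⟩ := exists_finrank_Vspace_eq_tdeg n ξ
  have htrace_norm : ξ + conj ξ ∈ ℚ⟮ξ⟯ ∧ ξ * conj ξ ∈ ℚ⟮ξ⟯ :=
    Subfield.add_conj_mem_and_mul_conj_mem (K := ℚ⟮ξ⟯.toSubfield) hμ hξreal fun k hk => by
      have hXk : X ^ k ∈ degreeLT ℚ (n + 2) :=
        mem_degreeLT.2 ((degree_X_pow_le k).trans_lt (by exact_mod_cast (by omega : k < n + 2)))
      simpa only [aeval_X_pow, mem_toSubfield] using
        exists_aeval_eq_add_mul hμ hξreal hdeg (hμt ▸ ht) hXk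
  have hconj : conj ξ ∈ ℚ⟮ξ⟯ := by
    simpa using sub_mem htrace_norm.1 (mem_adjoin_simple_self ℚ ξ)
  have hint : IsIntegral ℚ ξ := by
    by_contra h
    rw [minpoly.eq_zero h, natDegree_zero] at hdeg
    omega
  have := adjoin.finiteDimensional hint
  refine ⟨htrace_norm.1, htrace_norm.2, ?_⟩
  rw [← adjoin.finrank hint, finrank_eq_two_mul_finrank_inf_realSubfield _
    (fun z => apply_mem_adjoin_simple (starRingEnd ℂ).toRatAlgHom hconj)
    (mem_adjoin_simple_self ℚ ξ) hξreal]

theorem trace_norm_mem_and_index_two_of_large_tdeg (n : ℕ) (hn : 0 < n)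
    (hne : Even n) (ξ : ℂ) (hξreal : ξ.im ≠ 0) (hξalg : IsAlgebraic ℚ ξ)
    (hdeg : n < (minpoly ℚ ξ).natDegree)
    (ht : n + 1 < 2 * tdeg n ξ) :
    ξ + (starRingEnd ℂ) ξ ∈ IntermediateField.adjoin ℚ {ξ} ∧
    ξ * (starRingEnd ℂ) ξ ∈ IntermediateField.adjoin ℚ {ξ} ∧
    2 * Module.finrank ℚ
      (IntermediateField.adjoin ℚ {ξ} ⊓ realSubfield : IntermediateField ℚ ℂ)
      = (minpoly ℚ ξ).natDegree :=
  trace_norm_mem_and_index_two_of_large_tdeg_general n hn ξ hξreal hdeg ht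
end

section
/- Let ξ be a complex non-real algebraic number, n a positive integer, and suppose t_n(ξ) = (n+2)/2 with μ₀ ∈ ℂ* attaining dim V_n(μ₀,ξ) = (n+2)/2, where n is even and deg ξ > n. Let U₀ ⊂ ℚ^{n+1} correspond to V_n(μ₀,ξ). Then the linear forms M(x) = Σ_{i=0}^n ξ^i x_i and M'(x) = Σ_{i=1}^n i·ξ^{i−1} x_i are linearly independent over ℂ on U₀. -/
/-!
Write `n = 2m` and `V = V_n(μ₀, ξ)`, so `dim V = m + 1`. Inside the `(2m + 1)`-dimensional space
of polynomials of degree `≤ 2m`, `V` meets the polynomials of degree `≤ m + 1` in a space of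
dimension `≥ 2`, which therefore contains `f, g ≠ 0` with `deg f < deg g ≤ m + 1`. Vanishing of
`aM + bM'` on the coefficient vectors of `f` and `g` reads `a f(ξ) + b f'(ξ) = 0 = a g(ξ) + b g'(ξ)`,
so `b W(ξ) = 0` for the Wronskian `W = f g' - f' g`. Its leading coefficient is
`(deg g - deg f) lc(f) lc(g) ≠ 0` and `deg W < deg f + deg g ≤ n + 1 ≤ deg ξ`, so `W(ξ) ≠ 0` and
`b = 0`; then `a f(ξ) = 0` gives `a = 0`.
-/

open Polynomial

open Module

theorem Submodule.finrank_add_finrank_le_finrank_add_finrank_inf {K V : Type*} [DivisionRing K]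
    [AddCommGroup V] [Module K V] {s t u : Submodule K V} [FiniteDimensional K u]
    (hs : s ≤ u) (ht : t ≤ u) :
    finrank K s + finrank K t ≤ finrank K u + finrank K ↥(s ⊓ t) := by
  have : FiniteDimensional K s := Submodule.finiteDimensional_of_le hs
  have : FiniteDimensional K t := Submodule.finiteDimensional_of_le ht
  rw [← Submodule.finrank_sup_add_finrank_inf_eq]
  gcongr
  exact Submodule.finrank_mono (sup_le hs ht)

theorem minpoly.aeval_ne_zero_of_natDegree_lt {F A : Type*} [Field F] [Ring A] [Algebra F A]
    {x : A} {p : F[X]} (hp : p ≠ 0) (hdeg : p.natDegree < (minpoly F x).natDegree) :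
    Polynomial.aeval x p ≠ 0 := fun hx =>
  hdeg.not_ge (natDegree_le_natDegree (minpoly.degree_le_of_ne_zero F x hp hx))

namespace Polynomial

section Field

variable {K : Type*} [Field K]

instance (n : ℕ) : FiniteDimensional K (degreeLT K n) :=
  .equiv (degreeLTEquiv K n).symm

theorem finrank_degreeLT_s15 (n : ℕ) : finrank K (degreeLT K n) = n := by
  rw [(degreeLTEquiv K n).finrank_eq, finrank_fin_fun]

theorem exists_natDegree_lt_of_two_le_finrank {W : Submodule K K[X]} [FiniteDimensional K W]
    (hW : 2 ≤ finrank K W) :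
    ∃ f ∈ W, ∃ g ∈ W, f ≠ 0 ∧ g ≠ 0 ∧ f.natDegree < g.natDegree := by
  by_contra! hdeg
  obtain ⟨f₀, hf₀W, hf₀⟩ := Submodule.exists_mem_ne_zero_of_ne_bot
    (Submodule.one_le_finrank_iff.mp (by omega) : W ≠ ⊥)
  -- All nonzero elements of `W` have degree `d = deg f₀`, so `W` embeds into `K` by `coeff · d`.
  have hinj : Function.Injective ((lcoeff K f₀.natDegree).comp W.subtype) := by
    rw [← LinearMap.ker_eq_bot, Submodule.eq_bot_iff]
    rintro ⟨f, hfW⟩ hf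
    by_contra hf0
    have hf0' : f ≠ 0 := fun h => hf0 (Subtype.ext h)
    have hd : f.natDegree = f₀.natDegree :=
      le_antisymm (hdeg f₀ hf₀W f hfW hf₀ hf0') (hdeg f hfW f₀ hf₀W hf0' hf₀)
    exact leadingCoeff_ne_zero.mpr hf0' (by simpa [leadingCoeff, hd] using hf)
  have := LinearMap.finrank_le_finrank_of_injective hinj
  rw [finrank_self] at this
  omega

theorem two_le_finrank_inf_degreeLT {m : ℕ} (hm : 0 < m) {V : Submodule K K[X]}
    (hV : V ≤ degreeLT K (m + m + 1)) (hdim : finrank K V = m + 1) :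
    2 ≤ finrank K ↥(V ⊓ degreeLT K (m + 2)) := by
  have := Submodule.finrank_add_finrank_le_finrank_add_finrank_inf hV
    (degreeLT_mono (by omega : m + 2 ≤ m + m + 1))
  rw [hdim, finrank_degreeLT_s15, finrank_degreeLT_s15] at this
  omega

end Field

theorem wronskian_ne_zero_of_natDegree_ne {R : Type*} [CommRing R] [IsDomain R] [CharZero R]
    {f g : R[X]} (hf : f ≠ 0) (hg : g ≠ 0) (hfg : f.natDegree ≠ g.natDegree) :
    wronskian f g ≠ 0 := by
  intro hW
  have h := congrArg leadingCoeff (sub_eq_zero.mp hW)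
  simp only [leadingCoeff_mul, leadingCoeff_derivative] at h
  have hlc : f.leadingCoeff * g.leadingCoeff ≠ 0 :=
    mul_ne_zero (leadingCoeff_ne_zero.mpr hf) (leadingCoeff_ne_zero.mpr hg)
  have : (g.natDegree : R) = f.natDegree := mul_left_cancel₀ hlc (by linear_combination h)
  exact hfg (by exact_mod_cast this.symm)

theorem eq_zero_of_mul_aeval_add_mul_aeval_derivative_eq_zero {F A : Type*} [Field F]
    [CharZero F] [CommRing A] [IsDomain A] [Algebra F A] {x : A} {f g : F[X]} (hf : f ≠ 0)
    (hg : g ≠ 0) (hfg : f.natDegree < g.natDegree)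
    (hdeg : f.natDegree + g.natDegree ≤ (minpoly F x).natDegree) {a b : A}
    (hfx : a * aeval x f + b * aeval x (derivative f) = 0)
    (hgx : a * aeval x g + b * aeval x (derivative g) = 0) :
    a = 0 ∧ b = 0 := by
  have hbW : b * aeval x (wronskian f g) = 0 := by
    rw [wronskian, map_sub, map_mul, map_mul]
    linear_combination aeval x f * hgx - aeval x g * hfx
  have hW := wronskian_ne_zero_of_natDegree_ne hf hg hfg.ne
  have hb : b = 0 := (mul_eq_zero.mp hbW).resolve_right <|
    minpoly.aeval_ne_zero_of_natDegree_lt hW ((natDegree_wronskian_lt_add hW).trans_le hdeg)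
  have hafx : a * aeval x f = 0 := by simpa [hb] using hfx
  exact ⟨(mul_eq_zero.mp hafx).resolve_right
    (minpoly.aeval_ne_zero_of_natDegree_lt hf (by omega)), hb⟩

section Sums

variable {K : Type*} [Field K] [CharZero K] {n : ℕ} {f : ℚ[X]}

theorem sum_fin_pow_mul_coeff (hf : f.natDegree ≤ n) (x : K) :
    ∑ i : Fin (n + 1), x ^ (i : ℕ) * (f.coeff i : K) = aeval x f := by
  rw [aeval_eq_sum_range' (Nat.lt_succ_of_le hf), ← Fin.sum_univ_eq_sum_range]
  simp [Rat.smul_def, mul_comm]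

theorem sum_fin_mul_pow_mul_coeff (hf : f.natDegree ≤ n) (x : K) :
    ∑ i : Fin (n + 1), ((i : ℕ) : K) * x ^ ((i : ℕ) - 1) * (f.coeff i : K) =
      aeval x (derivative f) := by
  conv_rhs => rw [f.as_sum_range' (n + 1) (Nat.lt_succ_of_le hf)]
  rw [← Fin.sum_univ_eq_sum_range]
  simp only [map_sum, derivative_monomial, aeval_monomial, eq_ratCast]
  exact Finset.sum_congr rfl fun i _ => by push_cast; ring

end Sums

end Polynomial

theorem vspace_le_degreeLT (n : ℕ) (μ ξ : ℂ) : Vspace n μ ξ ≤ degreeLT ℚ (n + 1) := by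
  intro f hf
  rw [degreeLT_succ_eq_degreeLE, mem_degreeLE, ← natDegree_le_iff_degree_le]
  exact hf.1

theorem M_and_M'_independent_on_U0_general (n : ℕ) (hn : 0 < n) (hne : Even n) (ξ : ℂ)
    (hdeg : n < (minpoly ℚ ξ).natDegree)
    (μ₀ : ℂ)
    (hmax : Module.finrank ℚ (Vspace n μ₀ ξ) = tdeg n ξ)
    (ht : 2 * tdeg n ξ = n + 2) :
    ∀ a b : ℂ,
      (∀ x : Fin (n + 1) → ℚ,
        (∃ r : ℝ, μ₀ * (∑ i : Fin (n + 1), ξ ^ (i : ℕ) * (x i : ℂ)) = (r : ℂ)) →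
        a * (∑ i : Fin (n + 1), ξ ^ (i : ℕ) * (x i : ℂ))
          + b * (∑ i : Fin (n + 1), (i : ℕ) * ξ ^ ((i : ℕ) - 1) * (x i : ℂ)) = 0) →
      a = 0 ∧ b = 0 := by
  intro a b hM
  obtain ⟨m, rfl⟩ := hne
  have hrel : ∀ f ∈ Vspace (m + m) μ₀ ξ, a * aeval ξ f + b * aeval ξ (derivative f) = 0 := by
    rintro f ⟨hfn, hreal⟩
    have := hM (fun i => f.coeff i) (by rw [sum_fin_pow_mul_coeff hfn]; exact hreal)
    rwa [sum_fin_pow_mul_coeff hfn, sum_fin_mul_pow_mul_coeff hfn] at this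
  obtain ⟨f, ⟨hfV, -⟩, g, ⟨hgV, hgB⟩, hf, hg, hfg⟩ := exists_natDegree_lt_of_two_le_finrank <|
    two_le_finrank_inf_degreeLT (m := m) (by omega) (vspace_le_degreeLT _ μ₀ ξ) (by omega)
  have hg_deg : g.natDegree < m + 2 := (natDegree_lt_iff_degree_lt hg).mpr (mem_degreeLT.mp hgB)
  exact eq_zero_of_mul_aeval_add_mul_aeval_derivative_eq_zero hf hg hfg (by omega)
    (hrel f hfV) (hrel g hgV)

theorem M_and_M'_independent_on_U0 (n : ℕ) (hn : 0 < n) (hne : Even n) (ξ : ℂ)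
    (hξreal : ξ.im ≠ 0) (hξalg : IsAlgebraic ℚ ξ)
    (hdeg : n < (minpoly ℚ ξ).natDegree)
    (μ₀ : ℂ) (hμ₀ : μ₀ ≠ 0)
    (hmax : Module.finrank ℚ (Vspace n μ₀ ξ) = tdeg n ξ)
    (ht : 2 * tdeg n ξ = n + 2) :
    ∀ a b : ℂ,
      (∀ x : Fin (n + 1) → ℚ,
        (∃ r : ℝ, μ₀ * (∑ i : Fin (n + 1), ξ ^ (i : ℕ) * (x i : ℂ)) = (r : ℂ)) →
        a * (∑ i : Fin (n + 1), ξ ^ (i : ℕ) * (x i : ℂ))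
          + b * (∑ i : Fin (n + 1), (i : ℕ) * ξ ^ ((i : ℕ) - 1) * (x i : ℂ)) = 0) →
      a = 0 ∧ b = 0 :=
  M_and_M'_independent_on_U0_general n hn hne ξ hdeg μ₀ hmax ht
end
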